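/- For a single-parameter gate generated by a Pauli operator, the parameter-shift rule holds: if f(θ) = ⟨ψ| e^{iθP/2} H e^{-iθP/2} |ψ⟩ where P is a Hermitian involution (P² = I), then f'(θ) = (f(θ + π/2) − f(θ − π/2))/2. -/
import Mathlib


open Matrix

/-- Parameter-shift rule for a gate generated by a Hermitian involution `P`. -/
theorem parameter_shift_rule {n : ℕ} (P H : Matrix (Fin n) (Fin n) ℂ)
    (hP : P.IsHermitian) (hP2 : P * P = 1) (hH : H.IsHermitian)
    (ψ : Fin n → ℂ) (hψ : star ψ ⬝ᵥ ψ = 1)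
    (U : ℝ → Matrix (Fin n) (Fin n) ℂ)
    (hU : ∀ θ : ℝ, U θ = (Real.cos (θ / 2) : ℂ) • (1 : Matrix (Fin n) (Fin n) ℂ)
      - (Complex.I * (Real.sin (θ / 2) : ℂ)) • P)
    (f : ℝ → ℂ)
    (hf : ∀ θ : ℝ, f θ = star ψ ⬝ᵥ ((U θ)ᴴ * H * U θ) *ᵥ ψ) :
    ∀ θ : ℝ, HasDerivAt f ((f (θ + Real.pi / 2) - f (θ - Real.pi / 2)) / 2) θ := by
  set a := star ψ ⬝ᵥ H *ᵥ ψ with ha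
  set b := star ψ ⬝ᵥ (P*H*P) *ᵥ ψ with hb
  set d := Complex.I * (star ψ ⬝ᵥ (P*H - H*P) *ᵥ ψ) with hd
  have key : ∀ θ : ℝ, f θ = (a+b)/2 + (Real.cos θ : ℂ) * ((a-b)/2) + (Real.sin θ : ℂ) * (d/2) := by
    intro θ
    set c : ℂ := (Real.cos (θ/2) : ℂ) with hc
    set s : ℂ := (Real.sin (θ/2) : ℂ) with hs
    have hUt : U θ = c • (1 : Matrix (Fin n) (Fin n) ℂ) - (Complex.I * s) • P := by
      rw [hU θ]
    have hUH : (U θ)ᴴ = c • (1 : Matrix (Fin n) (Fin n) ℂ) + (Complex.I * s) • P := by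
      rw [hUt]
      simp only [conjTranspose_sub, conjTranspose_smul, conjTranspose_one, hP.eq,
        star_mul', Complex.star_def, Complex.conj_I, Complex.conj_ofReal, hc, hs]
      module
    have hI : (Complex.I * s) * (Complex.I * s) = -(s^2) := by
      rw [mul_mul_mul_comm, Complex.I_mul_I]; ring
    have hM : (U θ)ᴴ * H * U θ =
        (c^2) • H + (Complex.I * c * s) • (P*H - H*P) +
          (-((Complex.I * s) * (Complex.I * s))) • (P*H*P) := by
      rw [hUH, hUt]
      simp only [Matrix.add_mul, Matrix.mul_sub, Matrix.sub_mul, Matrix.mul_add,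
        Matrix.smul_mul, Matrix.mul_smul, Matrix.one_mul, Matrix.mul_one,
        smul_smul, smul_sub]
      module
    rw [hI, neg_neg] at hM
    rw [hf θ, hM]
    simp only [Matrix.add_mulVec, Matrix.smul_mulVec, dotProduct_add,
      dotProduct_smul, smul_eq_mul, ← ha, ← hb]
    have r1 : c^2 = ((1 + Real.cos θ)/2 : ℝ) := by
      rw [hc, ← Complex.ofReal_pow]
      norm_cast
      rw [Real.cos_sq, show 2*(θ/2) = θ by ring]; ring
    have r2 : s^2 = ((1 - Real.cos θ)/2 : ℝ) := by
      rw [hs, ← Complex.ofReal_pow]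
      norm_cast
      rw [Real.sin_sq, Real.cos_sq, show 2*(θ/2) = θ by ring]; ring
    have r3 : c * s = ((Real.sin θ)/2 : ℝ) := by
      rw [hc, hs, ← Complex.ofReal_mul]
      norm_cast
      rw [show Real.sin θ = Real.sin (2*(θ/2)) by ring_nf, Real.sin_two_mul]; ring
    rw [hd]
    push_cast [r1, r2] at *
    rw [show Complex.I * c * s = Complex.I * (c*s) by ring, r3]
    push_cast
    ring
  intro θ
  have h1 : HasDerivAt (fun t : ℝ => ((Real.cos t : ℂ))) (-(Real.sin θ) : ℂ) θ := by
    exact_mod_cast (Real.hasDerivAt_cos θ).ofReal_comp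
  have h2 : HasDerivAt (fun t : ℝ => ((Real.sin t : ℂ))) ((Real.cos θ : ℝ) : ℂ) θ := by
    exact_mod_cast (Real.hasDerivAt_sin θ).ofReal_comp
  have hD : HasDerivAt f ((-(Real.sin θ) : ℂ) * ((a-b)/2) + (Real.cos θ : ℂ) * (d/2)) θ := by
    have hfe : f = fun t => (a+b)/2 + (Real.cos t : ℂ) * ((a-b)/2) + (Real.sin t : ℂ) * (d/2) :=
      funext key
    rw [hfe]
    exact ((h1.mul_const _).const_add _).add (h2.mul_const _)
  convert hD using 1
  rw [key (θ + Real.pi/2), key (θ - Real.pi/2), Real.cos_add_pi_div_two,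
    Real.sin_add_pi_div_two, Real.cos_sub_pi_div_two, Real.sin_sub_pi_div_two]
  push_cast
  ring
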